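/- arXiv:0808.1858 — 2 statements merged into one kernel-verified Lean document; each statement's English description precedes it below -/
import Mathlib

section
/- Let Ω be a locally compact Hausdorff space and let A be a regular Banach function algebra on Ω. Let E be a closed subset of Ω. If every point x ∈ E admits a closed neighbourhood N_x such that N_x ∩ E is a set of local synthesis for A, then E itself is a set of local synthesis for A. -/
open scoped ZeroAtInfty Topology

/-- `I⁰_A(E)` for a Banach function algebra `A` realised inside `C₀(Ω, ℂ)` via `ι`:
the set of `u ∈ A` whose support is compact and disjoint from `E`. -/
def idealCompactOff {Ω : Type*} [TopologicalSpace Ω]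
    {A : Type*} [NonUnitalNormedCommRing A] [NormedSpace ℂ A]
    [IsScalarTower ℂ A A] [SMulCommClass ℂ A A]
    (ι : A →ₙₐ[ℂ] C₀(Ω, ℂ)) (E : Set Ω) : Set A :=
  {u : A | HasCompactSupport ⇑(ι u) ∧ tsupport ⇑(ι u) ∩ E = ∅}

/-- `I^c_A(E)`: the set of `u ∈ A` with compact support vanishing on `E`. -/
def idealCompactVanishing {Ω : Type*} [TopologicalSpace Ω]
    {A : Type*} [NonUnitalNormedCommRing A] [NormedSpace ℂ A]
    [IsScalarTower ℂ A A] [SMulCommClass ℂ A A]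
    (ι : A →ₙₐ[ℂ] C₀(Ω, ℂ)) (E : Set Ω) : Set A :=
  {u : A | HasCompactSupport ⇑(ι u) ∧ ∀ x ∈ E, ι u x = 0}

/-- `E` is a set of local synthesis for `A` if `I^c_A(E) ⊆ closure (I⁰_A(E))`. -/
def IsLocalSynthesisSet {Ω : Type*} [TopologicalSpace Ω]
    {A : Type*} [NonUnitalNormedCommRing A] [NormedSpace ℂ A]
    [IsScalarTower ℂ A A] [SMulCommClass ℂ A A]
    (ι : A →ₙₐ[ℂ] C₀(Ω, ℂ)) (E : Set Ω) : Prop :=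
  idealCompactVanishing ι E ⊆ closure (idealCompactOff ι E)

set_option linter.unusedSectionVars false

open Set Function Filter

namespace LocalSynthAux

variable {Ω : Type*} [TopologicalSpace Ω]
    {A : Type*} [NonUnitalNormedCommRing A] [NormedSpace ℂ A]
    [IsScalarTower ℂ A A] [SMulCommClass ℂ A A]
    (ι : A →ₙₐ[ℂ] C₀(Ω, ℂ))

lemma coe_mul (a b : A) : ⇑(ι (a * b)) = ⇑(ι a) * ⇑(ι b) := by
  rw [map_mul]; rfl

lemma coe_sub (a b : A) : ⇑(ι (a - b)) = ⇑(ι a) - ⇑(ι b) := by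
  rw [map_sub]; rfl

lemma coe_add (a b : A) : ⇑(ι (a + b)) = ⇑(ι a) + ⇑(ι b) := by
  rw [map_add]; rfl

lemma apply_mul (a b : A) (y : Ω) : ι (a * b) y = ι a y * ι b y := by
  have := congrFun (coe_mul ι a b) y; simpa using this

lemma apply_sub (a b : A) (y : Ω) : ι (a - b) y = ι a y - ι b y := by
  have := congrFun (coe_sub ι a b) y; simpa using this

lemma apply_add (a b : A) (y : Ω) : ι (a + b) y = ι a y + ι b y := by
  have := congrFun (coe_add ι a b) y; simpa using this

lemma tsupport_mul_left (a b : A) :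
    tsupport ⇑(ι (a * b)) ⊆ tsupport ⇑(ι a) := by
  rw [coe_mul]
  exact closure_mono (support_mul_subset_left _ _)

lemma tsupport_mul_right (a b : A) :
    tsupport ⇑(ι (a * b)) ⊆ tsupport ⇑(ι b) := by
  rw [coe_mul]
  exact closure_mono (support_mul_subset_right _ _)

lemma hcs_mul_right (a b : A) (hb : HasCompactSupport ⇑(ι b)) :
    HasCompactSupport ⇑(ι (a * b)) :=
  IsCompact.of_isClosed_subset hb isClosed_closure (tsupport_mul_right ι a b)

lemma tsupport_subset_of_pointwise {a : A} {s : Set Ω} (hs : IsClosed s)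
    (h : ∀ y, y ∉ s → ι a y = 0) : tsupport ⇑(ι a) ⊆ s := by
  apply closure_minimal _ hs
  intro y hy
  by_contra hys
  exact hy (h y hys)

/-- `I⁰` is closed under addition, hence so is its closure. -/
lemma add_mem_closure_off {E : Set Ω} {a b : A}
    (ha : a ∈ closure (idealCompactOff ι E)) (hb : b ∈ closure (idealCompactOff ι E)) :
    a + b ∈ closure (idealCompactOff ι E) := by
  refine map_mem_closure₂ continuous_add ha hb ?_
  rintro x ⟨hx1, hx2⟩ y ⟨hy1, hy2⟩
  constructor
  · refine IsCompact.of_isClosed_subset (hx1.union hy1) isClosed_closure ?_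
    rw [coe_add]; exact tsupport_add _ _
  · rw [Set.eq_empty_iff_forall_notMem]
    rintro z ⟨hz1, hz2⟩
    have hz1' : z ∈ tsupport (⇑(ι x) + ⇑(ι y)) := by rwa [coe_add] at hz1
    rcases tsupport_add _ _ hz1' with h | h
    · exact Set.eq_empty_iff_forall_notMem.mp hx2 z ⟨h, hz2⟩
    · exact Set.eq_empty_iff_forall_notMem.mp hy2 z ⟨h, hz2⟩

variable [LocallyCompactSpace Ω] [T2Space Ω]

/-- regularity upgraded to compactly supported bumps -/
lemma exists_bump
    (hreg : ∀ (x : Ω) (N : Set Ω), IsOpen N → x ∈ N →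
      ∃ h : A, tsupport ⇑(ι h) ⊆ N ∧ ∀ᶠ y in 𝓝 x, ι h y = 1)
    (x : Ω) (N : Set Ω) (hN : IsOpen N) (hx : x ∈ N) :
    ∃ h : A, HasCompactSupport ⇑(ι h) ∧ tsupport ⇑(ι h) ⊆ N ∧ ∀ᶠ y in 𝓝 x, ι h y = 1 := by
  obtain ⟨K, hKc, hxK, hKN⟩ := exists_compact_subset hN hx
  obtain ⟨h, hsupp, h1⟩ := hreg x (interior K) isOpen_interior hxK
  exact ⟨h, IsCompact.of_isClosed_subset hKc isClosed_closure
      (hsupp.trans interior_subset), hsupp.trans (interior_subset.trans hKN), h1⟩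

/-- bump equal to 1 on an open neighbourhood of a compact set, supported in a given open set -/
lemma exists_bump_compact
    (hreg : ∀ (x : Ω) (N : Set Ω), IsOpen N → x ∈ N →
      ∃ h : A, tsupport ⇑(ι h) ⊆ N ∧ ∀ᶠ y in 𝓝 x, ι h y = 1)
    {S : Set Ω} (hS : IsCompact S) {U : Set Ω} (hU : IsOpen U) (hSU : S ⊆ U) :
    ∃ g : A, HasCompactSupport ⇑(ι g) ∧ tsupport ⇑(ι g) ⊆ U ∧
      ∃ W : Set Ω, IsOpen W ∧ S ⊆ W ∧ ∀ y ∈ W, ι g y = 1 := by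
  refine IsCompact.induction_on (p := fun t =>
      ∃ g : A, HasCompactSupport ⇑(ι g) ∧ tsupport ⇑(ι g) ⊆ U ∧
        ∃ W : Set Ω, IsOpen W ∧ t ⊆ W ∧ ∀ y ∈ W, ι g y = 1) hS ?_ ?_ ?_ ?_
  · exact ⟨0, by simp [map_zero, HasCompactSupport, tsupport],
      by simp [map_zero, tsupport], ∅, isOpen_empty, by simp, by simp⟩
  · rintro s t hst ⟨g, h1, h2, W, hW, htW, hgW⟩
    exact ⟨g, h1, h2, W, hW, hst.trans htW, hgW⟩
  · rintro s t ⟨g₁, hc₁, hs₁, W₁, hWo₁, hsW₁, hg₁⟩ ⟨g₂, hc₂, hs₂, W₂, hWo₂, hsW₂, hg₂⟩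
    refine ⟨g₁ + g₂ - g₁ * g₂, ?_, ?_, W₁ ∪ W₂, hWo₁.union hWo₂,
      Set.union_subset_union hsW₁ hsW₂, ?_⟩
    case refine_3 =>
      rintro y (hy | hy)
      · rw [apply_sub, apply_add, apply_mul, hg₁ y hy]; ring
      · rw [apply_sub, apply_add, apply_mul, hg₂ y hy]; ring
    all_goals
      have hsub : tsupport ⇑(ι (g₁ + g₂ - g₁ * g₂)) ⊆ tsupport ⇑(ι g₁) ∪ tsupport ⇑(ι g₂) := by
        refine tsupport_subset_of_pointwise ι (isClosed_closure.union isClosed_closure) ?_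
        intro y hy
        simp only [Set.mem_union, not_or] at hy
        have h1 : ι g₁ y = 0 := image_eq_zero_of_notMem_tsupport hy.1
        have h2 : ι g₂ y = 0 := image_eq_zero_of_notMem_tsupport hy.2
        rw [apply_sub, apply_add, apply_mul, h1, h2]; ring
    · exact IsCompact.of_isClosed_subset (hc₁.union hc₂) isClosed_closure hsub
    · exact hsub.trans (Set.union_subset hs₁ hs₂)
  · intro x hx
    obtain ⟨h, hc, hsupp, h1⟩ := exists_bump ι hreg x U hU (hSU hx)
    obtain ⟨W, hWmem, hWo, h1W⟩ := eventually_nhds_iff.mp h1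
    refine ⟨S ∩ W, inter_mem_nhdsWithin S (hWo.mem_nhds h1W), h, hc, hsupp,
      W, hWo, Set.inter_subset_right, hWmem⟩

end LocalSynthAux

/-- **Local synthesis is a local property.**
Let `Ω` be a locally compact Hausdorff space and `A` a regular Banach function
algebra on `Ω` (realised via an injective non-unital algebra homomorphism
`ι : A → C₀(Ω, ℂ)`; regularity: for every `x` and open neighbourhood `N` of `x`
there is `h ∈ A` supported in `N` with `h = 1` near `x`).  Let `E ⊆ Ω` be closed.
If every `x ∈ E` admits a closed neighbourhood `N` such that `N ∩ E` is a set of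
local synthesis for `A`, then `E` itself is a set of local synthesis for `A`. -/
theorem isLocalSynthesisSet_of_locally
    {Ω : Type*} [TopologicalSpace Ω] [LocallyCompactSpace Ω] [T2Space Ω]
    {A : Type*} [NonUnitalNormedCommRing A] [NormedSpace ℂ A]
    [IsScalarTower ℂ A A] [SMulCommClass ℂ A A] [CompleteSpace A]
    (ι : A →ₙₐ[ℂ] C₀(Ω, ℂ)) (hι : Function.Injective ι)
    (hreg : ∀ (x : Ω) (N : Set Ω), IsOpen N → x ∈ N →
      ∃ h : A, tsupport ⇑(ι h) ⊆ N ∧ ∀ᶠ y in 𝓝 x, ι h y = 1)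
    (E : Set Ω) (hE : IsClosed E)
    (hloc : ∀ x ∈ E, ∃ N : Set Ω, IsClosed N ∧ N ∈ 𝓝 x ∧
      IsLocalSynthesisSet ι (N ∩ E)) :
    IsLocalSynthesisSet ι E := by
    classical
  intro u hu
  obtain ⟨hKc, huE⟩ := hu
  have hpatch : ∀ x ∈ tsupport ⇑(ι u), ∃ N : Set Ω, IsClosed N ∧ N ∈ 𝓝 x ∧
      IsLocalSynthesisSet ι (N ∩ E) := by
    intro x hx
    by_cases hxE : x ∈ E
    · exact hloc x hxE
    · obtain ⟨K', hK'c, hxK', hK'E⟩ := exists_compact_subset hE.isOpen_compl hxE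
      refine ⟨K', hK'c.isClosed,
        Filter.mem_of_superset (isOpen_interior.mem_nhds hxK') interior_subset, ?_⟩
      have hKE : K' ∩ E = ∅ := by
        rw [Set.eq_empty_iff_forall_notMem]; rintro z ⟨hz1, hz2⟩; exact hK'E hz1 hz2
      rw [hKE]
      intro v hv
      exact subset_closure ⟨hv.1, Set.inter_empty _⟩
  choose! N hNcl hNnb hNsyn using hpatch
  obtain ⟨T, hTK, hTcov⟩ := hKc.elim_nhds_subcover (fun x => interior (N x))
      (fun x hx => interior_mem_nhds.mpr (hNnb x hx))
  have main : ∀ (T : Finset Ω), (∀ x ∈ T, x ∈ tsupport ⇑(ι u)) →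
      ∀ v : A, HasCompactSupport ⇑(ι v) → (∀ y ∈ E, ι v y = 0) →
        tsupport ⇑(ι v) ⊆ (⋃ x ∈ T, interior (N x)) →
        v ∈ closure (idealCompactOff ι E) := by
    intro T
    induction T using Finset.induction_on with
    | empty =>
      intro _ v hvc hvE hsupp
      have hv0 : v = 0 := by
        apply hι
        rw [map_zero]
        ext y
        have hy : ι v y = 0 := image_eq_zero_of_notMem_tsupport
          (fun h => by simpa using hsupp h)
        simpa using hy
      subst hv0
      exact subset_closure ⟨by simp [map_zero, HasCompactSupport, tsupport],
        by simp [map_zero, tsupport]⟩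
    | @insert a T' haT IH =>
      intro hTK' v hvc hvE hsupp
      have haK : a ∈ tsupport ⇑(ι u) := hTK' a (Finset.mem_insert_self a T')
      set Urest : Set Ω := ⋃ x ∈ T', interior (N x) with hUrest
      have hUrest_open : IsOpen Urest :=
        isOpen_biUnion (fun _ _ => isOpen_interior)
      have hScomp : IsCompact (tsupport ⇑(ι v) \ Urest) := hvc.diff hUrest_open
      have hSsub : tsupport ⇑(ι v) \ Urest ⊆ interior (N a) := by
        rintro z ⟨hz1, hz2⟩
        have hz3 := hsupp hz1
        rw [Finset.set_biUnion_insert] at hz3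
        rcases hz3 with h | h
        · exact h
        · exact absurd h hz2
      obtain ⟨g, hgc, hgsupp, W, hWo, hSW, hgW⟩ :=
        LocalSynthAux.exists_bump_compact ι hreg hScomp isOpen_interior hSsub
      have part1 : v - v * g ∈ closure (idealCompactOff ι E) := by
        refine IH (fun x hx => hTK' x (Finset.mem_insert_of_mem hx)) _ ?_ ?_ ?_
        · refine IsCompact.of_isClosed_subset hvc isClosed_closure ?_
          refine LocalSynthAux.tsupport_subset_of_pointwise ι isClosed_closure ?_
          intro y hy
          rw [LocalSynthAux.apply_sub, LocalSynthAux.apply_mul,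
            image_eq_zero_of_notMem_tsupport hy]
          ring
        · intro y hy
          rw [LocalSynthAux.apply_sub, LocalSynthAux.apply_mul, hvE y hy]
          ring
        · have hsub1 : tsupport ⇑(ι (v - v * g)) ⊆ tsupport ⇑(ι v) \ W := by
            refine LocalSynthAux.tsupport_subset_of_pointwise ι
              (isClosed_closure.inter hWo.isClosed_compl) ?_
            intro y hy
            simp only [Set.mem_diff, not_and, not_not] at hy
            by_cases hyv : y ∈ tsupport ⇑(ι v)
            · rw [LocalSynthAux.apply_sub, LocalSynthAux.apply_mul, hgW y (hy hyv)]
              ring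
            · rw [LocalSynthAux.apply_sub, LocalSynthAux.apply_mul,
                image_eq_zero_of_notMem_tsupport hyv]
              ring
          refine hsub1.trans ?_
          rintro y ⟨hy1, hy2⟩
          by_contra hyU
          exact hy2 (hSW ⟨hy1, hyU⟩)
      have part2 : v * g ∈ closure (idealCompactOff ι E) := by
        have hwc : HasCompactSupport ⇑(ι (v * g)) := LocalSynthAux.hcs_mul_right ι v g hgc
        have hwsupp : tsupport ⇑(ι (v * g)) ⊆ interior (N a) :=
          (LocalSynthAux.tsupport_mul_right ι v g).trans hgsupp
        have hcl : v * g ∈ closure (idealCompactOff ι (N a ∩ E)) := by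
          refine hNsyn a haK ⟨hwc, ?_⟩
          intro y hy
          rw [LocalSynthAux.apply_mul, hvE y hy.2]
          ring
        obtain ⟨g', hg'c, hg'supp, W', hW'o, hWW', hg'W⟩ :=
          LocalSynthAux.exists_bump_compact ι hreg hwc isOpen_interior hwsupp
        have key : v * g * g' = v * g := by
          apply hι
          ext y
          show ι (v * g * g') y = ι (v * g) y
          by_cases hyW : y ∈ W'
          · rw [LocalSynthAux.apply_mul ι (v*g) g', hg'W y hyW]; ring
          · rw [LocalSynthAux.apply_mul ι (v*g) g',
              image_eq_zero_of_notMem_tsupport (fun h => hyW (hWW' h))]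
            ring
        rw [← key]
        refine map_mem_closure (f := fun z => z * g') (continuous_mul_right g') hcl ?_
        rintro z ⟨hz1, hz2⟩
        refine ⟨LocalSynthAux.hcs_mul_right ι z g' hg'c, ?_⟩
        rw [Set.eq_empty_iff_forall_notMem]
        rintro y ⟨hy1, hy2⟩
        have hyz : y ∈ tsupport ⇑(ι z) := LocalSynthAux.tsupport_mul_left ι z g' hy1
        have hyN : y ∈ N a :=
          interior_subset (hg'supp (LocalSynthAux.tsupport_mul_right ι z g' hy1))
        exact Set.eq_empty_iff_forall_notMem.mp hz2 y ⟨hyz, hyN, hy2⟩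
      have : v = (v - v * g) + v * g := by abel
      rw [this]
      exact LocalSynthAux.add_mem_closure_off ι part1 part2
  exact main T hTK u hKc huE hTcov
end

section
/- Let Ω be a locally compact Hausdorff space, A a regular Banach function algebra on Ω, and E ⊆ Ω closed. Let N ⊆ Ω be a closed set and let h ∈ A with supp h contained in the interior of N. If u ∈ A lies in the norm closure of I⁰_A(N ∩ E), then h·u lies in the norm closure of I⁰_A(E). -/
open scoped ZeroAtInfty Topology

/-- Let `Ω` be a locally compact Hausdorff space and `A` a regular Banach function
algebra on `Ω` (realised via an injective non-unital algebra homomorphism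
`ι : A → C₀(Ω, ℂ)`; regularity: for every `x` and open neighbourhood `N` of `x`
there is `h ∈ A` supported in `N` with `h = 1` near `x`).  Let `E ⊆ Ω` be closed,
let `N ⊆ Ω` be a closed set, and let `h ∈ A` with `supp h` contained in the
interior of `N`.  If `u ∈ A` lies in the norm closure of `I⁰_A(N ∩ E)`, then
`h·u` lies in the norm closure of `I⁰_A(E)`. -/
theorem mul_mem_closure_idealCompactOff
    {Ω : Type*} [TopologicalSpace Ω] [LocallyCompactSpace Ω] [T2Space Ω]
    {A : Type*} [NonUnitalNormedCommRing A] [NormedSpace ℂ A]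
    [IsScalarTower ℂ A A] [SMulCommClass ℂ A A] [CompleteSpace A]
    (ι : A →ₙₐ[ℂ] C₀(Ω, ℂ)) (hι : Function.Injective ι)
    (hreg : ∀ (x : Ω) (N : Set Ω), IsOpen N → x ∈ N →
      ∃ h : A, tsupport ⇑(ι h) ⊆ N ∧ ∀ᶠ y in 𝓝 x, ι h y = 1)
    (E : Set Ω) (hE : IsClosed E) (N : Set Ω) (hN : IsClosed N)
    (h : A) (hsupp : tsupport ⇑(ι h) ⊆ interior N)
    (u : A) (hu : u ∈ closure (idealCompactOff ι (N ∩ E))) :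
    h * u ∈ closure (idealCompactOff ι E) := by
  refine map_mem_closure (continuous_mul_left h) hu ?_
  rintro v ⟨hvc, hvd⟩
  have hmul : ⇑(ι (h * v)) = ⇑(ι h) * ⇑(ι v) := by
    simp [map_mul]
  have hsub : tsupport ⇑(ι (h * v)) ⊆ tsupport ⇑(ι h) ∩ tsupport ⇑(ι v) := by
    rw [hmul]
    refine closure_minimal ?_ (isClosed_closure.inter isClosed_closure)
    intro x hx
    have hx' : ι h x ≠ 0 ∧ ι v x ≠ 0 := by
      by_contra hc
      push_neg at hc
      simp only [Function.mem_support, Pi.mul_apply, ne_eq] at hx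
      rcases eq_or_ne (ι h x) 0 with h0 | h0
      · exact hx (by rw [h0, zero_mul])
      · exact hx (by rw [hc h0, mul_zero])
    exact ⟨subset_closure hx'.1, subset_closure hx'.2⟩
  constructor
  · exact hvc.of_isClosed_subset (isClosed_tsupport _)
      (hsub.trans (Set.inter_subset_right))
  · rw [Set.eq_empty_iff_forall_notMem]
    rintro x ⟨hx, hxE⟩
    have hxh : x ∈ tsupport ⇑(ι h) := (hsub hx).1
    have hxv : x ∈ tsupport ⇑(ι v) := (hsub hx).2
    have hxN : x ∈ N := interior_subset (hsupp hxh)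
    have : x ∈ tsupport ⇑(ι v) ∩ (N ∩ E) := ⟨hxv, hxN, hxE⟩
    rw [hvd] at this
    exact this
end
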